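/- A permutation σ satisfies: s(σ) avoids both 132 and 231 if and only if σ avoids the classical patterns 2341 and 1342 and the vincular patterns 3̲2̲41 and 3̲1̲42. That is, s^{-1}(Av(132,231)) = Av(2341, 1342, 3̲2̲41, 3̲1̲42). -/

import Mathlib

/-- West's stack-sorting map, implemented with fuel (fuel = length suffices). -/
def ssAux : ℕ → List ℕ → List ℕ
  | 0, _ => []
  | _ + 1, [] => []
  | fuel + 1, l =>
    let m := l.foldr max 0
    let i := l.idxOf m
    ssAux fuel (l.take i) ++ ssAux fuel (l.drop (i + 1)) ++ [m]

/-- West's stack-sorting map `s`. -/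
def stackSort (l : List ℕ) : List ℕ := ssAux l.length l

/-- `σ` contains the classical pattern `τ`. -/
def Contains (τ σ : List ℕ) : Prop :=
  ∃ f : Fin τ.length → Fin σ.length, StrictMono f ∧
    ∀ i j : Fin τ.length, τ.get i < τ.get j ↔ σ.get (f i) < σ.get (f j)

/-- `σ` avoids the classical pattern `τ`. -/
def Avoids (σ τ : List ℕ) : Prop := ¬ Contains τ σ

/-- `σ` contains the vincular pattern 3̲2̲41: indices `i₁ < i₂ < i₃ < i₄` with `i₂ = i₁ + 1`
and `σ(i₄) < σ(i₂) < σ(i₁) < σ(i₃)`. -/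
def Contains3241v (σ : List ℕ) : Prop :=
  ∃ i1 i2 i3 i4 : Fin σ.length, i1 < i2 ∧ i2 < i3 ∧ i3 < i4 ∧ (i2 : ℕ) = (i1 : ℕ) + 1 ∧
    σ.get i4 < σ.get i2 ∧ σ.get i2 < σ.get i1 ∧ σ.get i1 < σ.get i3

/-- `σ` contains the vincular pattern 3̲1̲42: indices `i₁ < i₂ < i₃ < i₄` with `i₂ = i₁ + 1`
and `σ(i₂) < σ(i₄) < σ(i₁) < σ(i₃)`. -/
def Contains3142v (σ : List ℕ) : Prop :=
  ∃ i1 i2 i3 i4 : Fin σ.length, i1 < i2 ∧ i2 < i3 ∧ i3 < i4 ∧ (i2 : ℕ) = (i1 : ℕ) + 1 ∧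
    σ.get i2 < σ.get i4 ∧ σ.get i4 < σ.get i1 ∧ σ.get i1 < σ.get i3

/-!
An inversion `b > a` of `s(σ)`, with `b` first, occurs exactly when `σ` contains `b c a` with
`c > b` (West): the entry `b` leaves the stack before `a` arrives only if something larger pushes
it out. Now `s(σ)` contains `132` or `231` iff some entry `y` of `s(σ)` has a smaller entry `x`
before it and a smaller entry `z` after it. The second condition says that `σ` contains `y c z`
with `c > y`; the first says that, if `x` comes after `y` in `σ`, no entry larger than `y` lies
between them. If `x` precedes `y` in `σ`, then `x y c z` is an occurrence of `2341` or `1342`;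
otherwise the entry immediately after `y` is smaller than `y` and forms, together with `y`, `c`
and `z`, an occurrence of `3̲2̲41` or `3̲1̲42`.
-/

open scoped List

namespace List

variable {α : Type*} {x y z : α} {l X Y : List α}

theorem pair_sublist_append_iff :
    [x, y] <+ X ++ Y ↔ [x, y] <+ X ∨ (x ∈ X ∧ y ∈ Y) ∨ [x, y] <+ Y := by
  constructor
  · rw [sublist_append_iff]
    rintro ⟨_ | ⟨a, _ | ⟨b, _ | ⟨c, l₁⟩⟩⟩, l₂, h, h₁, h₂⟩ <;> grind
  · rintro (h | ⟨hx, hy⟩ | h)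
    · exact h.trans (sublist_append_left X Y)
    · exact (singleton_sublist.mpr hx).append (singleton_sublist.mpr hy)
    · exact h.trans (sublist_append_right X Y)

theorem triple_sublist_append_cases (h : [x, y, z] <+ X ++ Y) :
    [x, y, z] <+ X ∨ (x ∈ X ∧ z ∈ Y) ∨ [x, y, z] <+ Y := by
  rw [sublist_append_iff] at h
  obtain ⟨_ | ⟨a, _ | ⟨b, _ | ⟨c, _ | ⟨d, l₁⟩⟩⟩⟩, l₂, h, h₁, h₂⟩ := h <;> grind

theorem pair_sublist_iff_getElem :
    [x, y] <+ l ↔ ∃ i j : Fin l.length, i < j ∧ l[i] = x ∧ l[j] = y := by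
  rw [sublist_iff_exists_fin_orderEmbedding_get_eq]
  constructor
  · rintro ⟨f, hf⟩
    exact ⟨f 0, f 1, f.lt_iff_lt.mpr (show (0 : Fin 2) < 1 by decide), by simpa using (hf 0).symm,
      by simpa using (hf 1).symm⟩
  · rintro ⟨i, j, hij, rfl, rfl⟩
    refine ⟨OrderEmbedding.ofStrictMono ![i, j] ?_, ?_⟩
    · simp [Fin.strictMono_iff_lt_succ, hij]
    · simp [Fin.forall_fin_succ]

theorem triple_sublist_iff_getElem :
    [x, y, z] <+ l ↔ ∃ i j k : Fin l.length, i < j ∧ j < k ∧ l[i] = x ∧ l[j] = y ∧ l[k] = z := by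
  rw [sublist_iff_exists_fin_orderEmbedding_get_eq]
  constructor
  · rintro ⟨f, hf⟩
    exact ⟨f 0, f 1, f 2, f.lt_iff_lt.mpr (show (0 : Fin 3) < 1 by decide),
      f.lt_iff_lt.mpr (show (1 : Fin 3) < 2 by decide), by simpa using (hf 0).symm, by simpa using (hf 1).symm, by simpa using (hf 2).symm⟩
  · rintro ⟨i, j, k, hij, hjk, rfl, rfl, rfl⟩
    refine ⟨OrderEmbedding.ofStrictMono ![i, j, k] ?_, ?_⟩
    · simp [Fin.strictMono_iff_lt_succ, Fin.forall_fin_succ, hij, hjk]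
    · simp [Fin.forall_fin_succ]

namespace Nodup

theorem fin_eq_of_getElem_eq (hl : l.Nodup) {i j : Fin l.length} (h : l[i] = l[j]) : i = j :=
  Fin.ext (hl.getElem_inj_iff.mp h)

theorem triple_sublist_iff (hl : l.Nodup) : [x, y, z] <+ l ↔ [x, y] <+ l ∧ [y, z] <+ l := by
  refine ⟨fun h => ⟨(by simp : [x, y] <+ [x, y, z]).trans h, (sublist_cons_self _ _).trans h⟩, ?_⟩
  rintro ⟨hxy, hyz⟩
  obtain ⟨i, j, hij, rfl, rfl⟩ := pair_sublist_iff_getElem.mp hxy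
  obtain ⟨j', k, hjk, hj, rfl⟩ := pair_sublist_iff_getElem.mp hyz
  obtain rfl := hl.fin_eq_of_getElem_eq hj
  exact triple_sublist_iff_getElem.mpr ⟨i, j', k, hij, hjk, rfl, rfl, rfl⟩

theorem pair_sublist_iff_not_sublist_swap (hl : l.Nodup) (hx : x ∈ l) (hy : y ∈ l)
    (hxy : x ≠ y) : [x, y] <+ l ↔ ¬ [y, x] <+ l := by
  obtain ⟨i, rfl⟩ := mem_iff_get.mp hx
  obtain ⟨j, rfl⟩ := mem_iff_get.mp hy
  have hpair : ∀ i j : Fin l.length, [l.get i, l.get j] <+ l ↔ i < j := fun i j => by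
    simp only [pair_sublist_iff_getElem, get_eq_getElem]
    refine ⟨fun ⟨i', j', h, hi, hj⟩ => ?_, fun h => ⟨i, j, h, rfl, rfl⟩⟩
    rwa [← hl.fin_eq_of_getElem_eq hi, ← hl.fin_eq_of_getElem_eq hj]
  rw [hpair, hpair, not_lt]
  exact ⟨le_of_lt, fun h => lt_of_le_of_ne h fun hij => hxy (hij ▸ rfl)⟩

end Nodup

end List

section StackSort

variable {A B : List ℕ} {m : ℕ}

theorem foldr_max_append_cons (hA : ∀ a ∈ A, a < m) (hB : ∀ b ∈ B, b ≤ m) :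
    (A ++ m :: B).foldr max 0 = m := by
  refine le_antisymm (List.max_le_of_forall_le _ _ fun x hx => ?_)
    (List.le_max_of_le (by simp) le_rfl)
  rcases List.mem_append.mp hx with hx | hx
  · exact (hA x hx).le
  · rcases List.mem_cons.mp hx with rfl | hx
    exacts [le_rfl, hB x hx]

theorem ssAux_succ_append_cons (hA : ∀ a ∈ A, a < m) (hB : ∀ b ∈ B, b ≤ m) (fuel : ℕ) :
    ssAux (fuel + 1) (A ++ m :: B) = ssAux fuel A ++ ssAux fuel B ++ [m] := by
  have hmA : m ∉ A := fun h => lt_irrefl m (hA m h)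
  rw [ssAux]
  · simp [foldr_max_append_cons hA hB, List.idxOf_append_of_notMem hmA]
  · simp

theorem exists_eq_append_cons_max {l : List ℕ} (hl : l ≠ []) :
    ∃ A m B, l = A ++ m :: B ∧ (∀ a ∈ A, a < m) ∧ ∀ b ∈ B, b ≤ m := by
  induction l with
  | nil => exact absurd rfl hl
  | cons x t ih =>
    by_cases hx : ∀ b ∈ t, b ≤ x
    · exact ⟨[], x, t, rfl, by simp, hx⟩
    obtain ⟨b, hbt, hxb⟩ : ∃ b ∈ t, x < b := by simpa using hx
    obtain ⟨A, m, B, rfl, hA, hB⟩ := ih (List.ne_nil_of_mem hbt)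
    have hbm : b ≤ m := by
      rcases List.mem_append.mp hbt with hb | hb
      · exact (hA b hb).le
      · rcases List.mem_cons.mp hb with rfl | hb
        exacts [le_rfl, hB b hb]
    refine ⟨x :: A, m, B, rfl, ?_, hB⟩
    simpa using ⟨hxb.trans_le hbm, hA⟩

theorem induction_on_max_split {P : List ℕ → Prop} (nil : P [])
    (append_cons : ∀ A m B, (∀ a ∈ A, a < m) → (∀ b ∈ B, b ≤ m) → P A → P B → P (A ++ m :: B))
    (l : List ℕ) : P l := by
  induction hn : l.length using Nat.strong_induction_on generalizing l with
  | _ n ih =>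
    rcases eq_or_ne l [] with rfl | hl
    · exact nil
    obtain ⟨A, m, B, rfl, hA, hB⟩ := exists_eq_append_cons_max hl
    simp only [List.length_append, List.length_cons] at hn
    exact append_cons A m B hA hB (ih _ (by omega) A rfl) (ih _ (by omega) B rfl)

theorem ssAux_eq_stackSort {fuel : ℕ} {l : List ℕ} (h : l.length ≤ fuel) :
    ssAux fuel l = stackSort l := by
  induction l using induction_on_max_split generalizing fuel with
  | nil => cases fuel <;> rfl
  | append_cons A m B hA hB ihA ihB =>
    simp only [List.length_append, List.length_cons] at h
    obtain ⟨fuel, rfl⟩ : ∃ f, fuel = f + 1 := ⟨fuel - 1, by omega⟩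
    rw [stackSort, List.length_append, List.length_cons, ← add_assoc,
      ssAux_succ_append_cons hA hB, ssAux_succ_append_cons hA hB,
      ihA (by omega), ihA (by omega), ihB (by omega), ihB (by omega)]

theorem stackSort_append_cons (hA : ∀ a ∈ A, a < m) (hB : ∀ b ∈ B, b ≤ m) :
    stackSort (A ++ m :: B) = stackSort A ++ stackSort B ++ [m] := by
  rw [stackSort, List.length_append, List.length_cons, ← add_assoc,
    ssAux_succ_append_cons hA hB, ssAux_eq_stackSort (by omega), ssAux_eq_stackSort (by omega)]

theorem stackSort_perm (l : List ℕ) : (stackSort l).Perm l := by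
  induction l using induction_on_max_split with
  | nil => rfl
  | append_cons A m B hA hB ihA ihB =>
    rw [stackSort_append_cons hA hB]
    exact ((ihA.append ihB).append_right [m]).trans
      ((List.perm_append_singleton _ _).trans List.perm_middle.symm)

theorem mem_stackSort {l : List ℕ} {x : ℕ} : x ∈ stackSort l ↔ x ∈ l :=
  (stackSort_perm l).mem_iff

theorem nodup_stackSort {l : List ℕ} (hl : l.Nodup) : (stackSort l).Nodup :=
  (stackSort_perm l).nodup_iff.mpr hl

theorem pair_sublist_stackSort_iff {a b : ℕ} (hab : a < b) (l : List ℕ) :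
    [b, a] <+ stackSort l ↔ ∃ c, b < c ∧ [b, c, a] <+ l := by
  induction l using induction_on_max_split with
  | nil => simp [stackSort, ssAux]
  | append_cons A m B hA hB ihA ihB =>
    rw [stackSort_append_cons hA hB, List.append_assoc, List.pair_sublist_append_iff,
      List.pair_sublist_append_iff, ihA, ihB]
    simp only [mem_stackSort, List.mem_append, List.mem_singleton]
    constructor
    · rintro (⟨c, hbc, h⟩ | ⟨hb, ha | rfl⟩ | ⟨c, hbc, h⟩ | ⟨hb, rfl⟩ | h)
      · exact ⟨c, hbc, h.trans (List.sublist_append_left _ _)⟩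
      · exact ⟨m, hA b hb, (List.singleton_sublist.mpr hb).append (by simpa using ha)⟩
      · exact absurd (hA b hb) hab.not_gt
      · exact ⟨c, hbc, h.trans ((List.sublist_cons_self m B).trans (List.sublist_append_right _ _))⟩
      · exact absurd (hB b hb) hab.not_ge
      · exact absurd h.length_le (by simp)
    · rintro ⟨c, hbc, h⟩
      rcases List.triple_sublist_append_cases h with h | ⟨hb, ha⟩ | h
      · exact Or.inl ⟨c, hbc, h⟩
      · rcases List.mem_cons.mp ha with rfl | ha
        · exact absurd (hA b hb) hab.not_gt
        · exact Or.inr (Or.inl ⟨hb, Or.inl ha⟩)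
      · rcases List.sublist_cons_iff.mp h with h | ⟨r, hr, h⟩
        · exact Or.inr (Or.inr (Or.inl ⟨c, hbc, h⟩))
        · obtain ⟨rfl, rfl⟩ := List.cons.inj hr
          exact absurd (hB c (h.subset (by simp))) hbc.not_ge

end StackSort

section Peaks

variable {σ : List ℕ}

theorem getElem_pair_sublist_stackSort_iff_of_gt (hσ : σ.Nodup) {i k : Fin σ.length}
    (h : σ[k] < σ[i]) : [σ[i], σ[k]] <+ stackSort σ ↔ ∃ j, i < j ∧ j < k ∧ σ[i] < σ[j] := by
  rw [pair_sublist_stackSort_iff h]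
  constructor
  · rintro ⟨c, hc, hsub⟩
    obtain ⟨i', j, k', hij, hjk, hi, rfl, hk⟩ := List.triple_sublist_iff_getElem.mp hsub
    obtain rfl := hσ.fin_eq_of_getElem_eq hi
    obtain rfl := hσ.fin_eq_of_getElem_eq hk
    exact ⟨j, hij, hjk, hc⟩
  · rintro ⟨j, hij, hjk, hc⟩
    exact ⟨σ[j], hc, List.triple_sublist_iff_getElem.mpr ⟨i, j, k, hij, hjk, rfl, rfl, rfl⟩⟩

theorem getElem_pair_sublist_stackSort_iff_of_lt (hσ : σ.Nodup) {i k : Fin σ.length}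
    (h : σ[i] < σ[k]) : [σ[i], σ[k]] <+ stackSort σ ↔ ¬∃ j, k < j ∧ j < i ∧ σ[k] < σ[j] := by
  rw [(nodup_stackSort hσ).pair_sublist_iff_not_sublist_swap (mem_stackSort.mpr (by simp))
    (mem_stackSort.mpr (by simp)) h.ne, getElem_pair_sublist_stackSort_iff_of_gt hσ h]

theorem exists_peak_stackSort_iff (hσ : σ.Nodup) :
    (∃ x y z, [x, y, z] <+ stackSort σ ∧ x < y ∧ z < y) ↔
      ∃ p q r : Fin σ.length, σ[p] < σ[q] ∧ σ[r] < σ[q] ∧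
        (¬∃ j, q < j ∧ j < p ∧ σ[q] < σ[j]) ∧ ∃ j, q < j ∧ j < r ∧ σ[q] < σ[j] := by
  simp only [(nodup_stackSort hσ).triple_sublist_iff]
  constructor
  · rintro ⟨x, y, z, ⟨hxy, hyz⟩, hx, hz⟩
    have hxσ := mem_stackSort.mp (hxy.subset (by simp : x ∈ [x, y]))
    have hyσ := mem_stackSort.mp (hyz.subset (by simp : y ∈ [y, z]))
    have hzσ := mem_stackSort.mp (hyz.subset (by simp : z ∈ [y, z]))
    obtain ⟨p, rfl⟩ := List.mem_iff_get.mp hxσ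
    obtain ⟨q, rfl⟩ := List.mem_iff_get.mp hyσ
    obtain ⟨r, rfl⟩ := List.mem_iff_get.mp hzσ
    simp only [List.get_eq_getElem] at hxy hyz hx hz
    exact ⟨p, q, r, hx, hz, (getElem_pair_sublist_stackSort_iff_of_lt hσ hx).mp hxy,
      (getElem_pair_sublist_stackSort_iff_of_gt hσ hz).mp hyz⟩
  · rintro ⟨p, q, r, hx, hz, hpq, hqr⟩
    exact ⟨σ[p], σ[q], σ[r], ⟨(getElem_pair_sublist_stackSort_iff_of_lt hσ hx).mpr hpq,
      (getElem_pair_sublist_stackSort_iff_of_gt hσ hz).mpr hqr⟩, hx, hz⟩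

theorem exists_peak_index_iff (hσ : σ.Nodup) :
    (∃ p q r : Fin σ.length, σ[p] < σ[q] ∧ σ[r] < σ[q] ∧
        (¬∃ j, q < j ∧ j < p ∧ σ[q] < σ[j]) ∧ ∃ j, q < j ∧ j < r ∧ σ[q] < σ[j]) ↔
      (∃ i j k l : Fin σ.length, i < j ∧ j < k ∧ k < l ∧
        σ[i] < σ[j] ∧ σ[j] < σ[k] ∧ σ[l] < σ[j]) ∨
      (∃ i j k l : Fin σ.length, i < j ∧ j < k ∧ k < l ∧ (j : ℕ) = i + 1 ∧
        σ[j] < σ[i] ∧ σ[i] < σ[k] ∧ σ[l] < σ[i]) := by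
  constructor
  · rintro ⟨p, q, r, hpq, hrq, hsep, j, hqj, hjr, hcj⟩
    rcases lt_trichotomy p q with hp | rfl | hp
    · exact Or.inl ⟨p, q, j, r, hp, hqj, hjr, hpq, hcj, hrq⟩
    · exact absurd hpq (lt_irrefl _)
    · obtain ⟨s, hs_val⟩ : ∃ s : Fin σ.length, (s : ℕ) = q + 1 := ⟨⟨q + 1, by omega⟩, rfl⟩
      have hqs : q < s := by rw [Fin.lt_def]; omega
      have hs : σ[s] < σ[q] := by
        rcases (show s = p ∨ s < p by rw [Fin.ext_iff, Fin.lt_def]; omega) with rfl | hsp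
        · exact hpq
        · refine lt_of_le_of_ne (not_lt.mp fun h => hsep ⟨s, hqs, hsp, h⟩) fun h => ?_
          exact hqs.ne (hσ.fin_eq_of_getElem_eq h).symm
      have hsj : s < j := by
        refine lt_of_le_of_ne (Fin.le_def.mpr (by have := Fin.lt_def.mp hqj; omega)) ?_
        rintro rfl
        exact absurd (hs.trans hcj) (lt_irrefl _)
      exact Or.inr ⟨q, s, j, r, hqs, hsj, hjr, hs_val, hs, hcj, hrq⟩
  · rintro (⟨i, j, k, l, hij, hjk, hkl, h₁, h₂, h₃⟩ | ⟨i, j, k, l, hij, hjk, hkl, hadj, h₁, h₂, h₃⟩)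
    · exact ⟨i, j, l, h₁, h₃, fun ⟨m, hjm, hmi, _⟩ => absurd (hjm.trans hmi) hij.not_gt,
        k, hjk, hkl, h₂⟩
    · refine ⟨j, i, l, h₁, h₃, fun ⟨m, him, hmj, _⟩ => ?_, k, hij.trans hjk, hkl, h₂⟩
      rw [Fin.lt_def] at him hmj
      omega

end Peaks

section Containment

variable {σ : List ℕ}

theorem contains_iff_of_nodup {τ : List ℕ} (hτ : τ.Nodup) :
    Contains τ σ ↔ ∃ f : Fin τ.length → Fin σ.length, StrictMono f ∧
      ∀ i j, τ.get i < τ.get j → σ.get (f i) < σ.get (f j) := by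
  refine ⟨fun ⟨f, hf, h⟩ => ⟨f, hf, fun i j => (h i j).1⟩,
    fun ⟨f, hf, h⟩ => ⟨f, hf, fun i j => ⟨h i j, fun hσ => ?_⟩⟩⟩
  rcases lt_trichotomy (τ.get i) (τ.get j) with hlt | heq | hgt
  · exact hlt
  · obtain rfl := hτ.get_inj_iff.mp heq
    exact absurd hσ (lt_irrefl _)
  · exact absurd (h j i hgt) hσ.not_gt

theorem contains_132_iff :
    Contains [1, 3, 2] σ ↔ ∃ i j k : Fin σ.length, i < j ∧ j < k ∧ σ[i] < σ[k] ∧ σ[k] < σ[j] := by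
  rw [contains_iff_of_nodup (by decide)]
  constructor
  · rintro ⟨f, hf, h⟩
    exact ⟨f 0, f 1, f 2, hf (by decide), hf (by decide), h 0 2 (by decide), h 2 1 (by decide)⟩
  · rintro ⟨i, j, k, hij, hjk, h₁, h₂⟩
    refine ⟨![i, j, k], Fin.strictMono_iff_lt_succ.mpr (by simp [Fin.forall_fin_succ, hij, hjk]),
      fun a b hab => ?_⟩
    fin_cases a <;> fin_cases b <;>
      first | exact absurd hab (by decide) | exact h₁ | exact h₂ | exact h₁.trans h₂

theorem contains_231_iff :
    Contains [2, 3, 1] σ ↔ ∃ i j k : Fin σ.length, i < j ∧ j < k ∧ σ[k] < σ[i] ∧ σ[i] < σ[j] := by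
  rw [contains_iff_of_nodup (by decide)]
  constructor
  · rintro ⟨f, hf, h⟩
    exact ⟨f 0, f 1, f 2, hf (by decide), hf (by decide), h 2 0 (by decide), h 0 1 (by decide)⟩
  · rintro ⟨i, j, k, hij, hjk, h₁, h₂⟩
    refine ⟨![i, j, k], Fin.strictMono_iff_lt_succ.mpr (by simp [Fin.forall_fin_succ, hij, hjk]),
      fun a b hab => ?_⟩
    fin_cases a <;> fin_cases b <;>
      first | exact absurd hab (by decide) | exact h₁ | exact h₂ | exact h₁.trans h₂

theorem contains_2341_iff :
    Contains [2, 3, 4, 1] σ ↔ ∃ i j k l : Fin σ.length, i < j ∧ j < k ∧ k < l ∧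
      σ[l] < σ[i] ∧ σ[i] < σ[j] ∧ σ[j] < σ[k] := by
  rw [contains_iff_of_nodup (by decide)]
  constructor
  · rintro ⟨f, hf, h⟩
    exact ⟨f 0, f 1, f 2, f 3, hf (by decide), hf (by decide), hf (by decide),
      h 3 0 (by decide), h 0 1 (by decide), h 1 2 (by decide)⟩
  · rintro ⟨i, j, k, l, hij, hjk, hkl, h₁, h₂, h₃⟩
    refine ⟨![i, j, k, l],
      Fin.strictMono_iff_lt_succ.mpr (by simp [Fin.forall_fin_succ, hij, hjk, hkl]),
      fun a b hab => ?_⟩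
    fin_cases a <;> fin_cases b <;>
      first
        | exact absurd hab (by decide)
        | exact h₁ | exact h₂ | exact h₃
        | exact h₁.trans h₂ | exact h₂.trans h₃ | exact (h₁.trans h₂).trans h₃

theorem contains_1342_iff :
    Contains [1, 3, 4, 2] σ ↔ ∃ i j k l : Fin σ.length, i < j ∧ j < k ∧ k < l ∧
      σ[i] < σ[l] ∧ σ[l] < σ[j] ∧ σ[j] < σ[k] := by
  rw [contains_iff_of_nodup (by decide)]
  constructor
  · rintro ⟨f, hf, h⟩
    exact ⟨f 0, f 1, f 2, f 3, hf (by decide), hf (by decide), hf (by decide),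
      h 0 3 (by decide), h 3 1 (by decide), h 1 2 (by decide)⟩
  · rintro ⟨i, j, k, l, hij, hjk, hkl, h₁, h₂, h₃⟩
    refine ⟨![i, j, k, l],
      Fin.strictMono_iff_lt_succ.mpr (by simp [Fin.forall_fin_succ, hij, hjk, hkl]),
      fun a b hab => ?_⟩
    fin_cases a <;> fin_cases b <;>
      first
        | exact absurd hab (by decide)
        | exact h₁ | exact h₂ | exact h₃
        | exact h₁.trans h₂ | exact h₂.trans h₃ | exact (h₁.trans h₂).trans h₃

theorem contains_132_or_231_iff (hσ : σ.Nodup) :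
    Contains [1, 3, 2] σ ∨ Contains [2, 3, 1] σ ↔ ∃ x y z, [x, y, z] <+ σ ∧ x < y ∧ z < y := by
  simp only [contains_132_iff, contains_231_iff, List.triple_sublist_iff_getElem]
  constructor
  · rintro (⟨i, j, k, hij, hjk, h₁, h₂⟩ | ⟨i, j, k, hij, hjk, h₁, h₂⟩)
    · exact ⟨_, _, _, ⟨i, j, k, hij, hjk, rfl, rfl, rfl⟩, h₁.trans h₂, h₂⟩
    · exact ⟨_, _, _, ⟨i, j, k, hij, hjk, rfl, rfl, rfl⟩, h₂, h₁.trans h₂⟩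
  · rintro ⟨_, _, _, ⟨i, j, k, hij, hjk, rfl, rfl, rfl⟩, h₁, h₂⟩
    rcases lt_or_gt_of_ne fun h => (hij.trans hjk).ne (hσ.fin_eq_of_getElem_eq h) with h | h
    · exact Or.inl ⟨i, j, k, hij, hjk, h, h₂⟩
    · exact Or.inr ⟨i, j, k, hij, hjk, h, h₁⟩

theorem contains_2341_or_1342_iff (hσ : σ.Nodup) :
    Contains [2, 3, 4, 1] σ ∨ Contains [1, 3, 4, 2] σ ↔ ∃ i j k l : Fin σ.length,
      i < j ∧ j < k ∧ k < l ∧ σ[i] < σ[j] ∧ σ[j] < σ[k] ∧ σ[l] < σ[j] := by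
  simp only [contains_2341_iff, contains_1342_iff]
  constructor
  · rintro (⟨i, j, k, l, hij, hjk, hkl, h₁, h₂, h₃⟩ | ⟨i, j, k, l, hij, hjk, hkl, h₁, h₂, h₃⟩)
    · exact ⟨i, j, k, l, hij, hjk, hkl, h₂, h₃, h₁.trans h₂⟩
    · exact ⟨i, j, k, l, hij, hjk, hkl, h₁.trans h₂, h₃, h₂⟩
  · rintro ⟨i, j, k, l, hij, hjk, hkl, h₁, h₂, h₃⟩
    rcases lt_or_gt_of_ne fun h => ((hij.trans hjk).trans hkl).ne (hσ.fin_eq_of_getElem_eq h).symm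
      with h | h
    · exact Or.inl ⟨i, j, k, l, hij, hjk, hkl, h, h₁, h₂⟩
    · exact Or.inr ⟨i, j, k, l, hij, hjk, hkl, h, h₃, h₂⟩

theorem contains3241v_or_contains3142v_iff (hσ : σ.Nodup) :
    Contains3241v σ ∨ Contains3142v σ ↔ ∃ i j k l : Fin σ.length,
      i < j ∧ j < k ∧ k < l ∧ (j : ℕ) = i + 1 ∧ σ[j] < σ[i] ∧ σ[i] < σ[k] ∧ σ[l] < σ[i] := by
  simp only [Contains3241v, Contains3142v, List.get_eq_getElem]
  constructor
  · rintro (⟨i, j, k, l, hij, hjk, hkl, hadj, h₁, h₂, h₃⟩ |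
      ⟨i, j, k, l, hij, hjk, hkl, hadj, h₁, h₂, h₃⟩)
    · exact ⟨i, j, k, l, hij, hjk, hkl, hadj, h₂, h₃, h₁.trans h₂⟩
    · exact ⟨i, j, k, l, hij, hjk, hkl, hadj, h₁.trans h₂, h₃, h₂⟩
  · rintro ⟨i, j, k, l, hij, hjk, hkl, hadj, h₁, h₂, h₃⟩
    rcases lt_or_gt_of_ne fun h => (hjk.trans hkl).ne (hσ.fin_eq_of_getElem_eq h).symm with h | h
    · exact Or.inl ⟨i, j, k, l, hij, hjk, hkl, hadj, h, h₁, h₂⟩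
    · exact Or.inr ⟨i, j, k, l, hij, hjk, hkl, hadj, h, h₃, h₂⟩

end Containment

/-- `s⁻¹(Av(132,231)) = Av(2341, 1342, 3̲2̲41, 3̲1̲42)`. -/
theorem stmt6 (n : ℕ) (σ : List ℕ) (hσ : σ.Perm (List.range' 1 n)) :
    (Avoids (stackSort σ) [1, 3, 2] ∧ Avoids (stackSort σ) [2, 3, 1]) ↔
      Avoids σ [2, 3, 4, 1] ∧ Avoids σ [1, 3, 4, 2] ∧
        ¬ Contains3241v σ ∧ ¬ Contains3142v σ := by
  have hnd : σ.Nodup := hσ.nodup_iff.mpr List.nodup_range'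
  simp only [Avoids, ← not_or]
  rw [not_iff_not, ← or_assoc, contains_132_or_231_iff (nodup_stackSort hnd),
    contains_2341_or_1342_iff hnd, contains3241v_or_contains3142v_iff hnd,
    exists_peak_stackSort_iff hnd, exists_peak_index_iff hnd]
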